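/- If F is a finite transducer, ω is eventually strongly almost periodic, and F(ω) is infinite, then F(ω) is eventually strongly almost periodic. -/

import Mathlib

/-- The factor of `ω` starting at `i` of length `n`. -/
def seg {α : Type*} (ω : ℕ → α) (i n : ℕ) : List α :=
  (List.range n).map (fun k => ω (i + k))

/-- `x` occurs in `ω` at position `i`. -/
def OccursAt {α : Type*} (ω : ℕ → α) (x : List α) (i : ℕ) : Prop :=
  seg ω i x.length = x

/-- Strongly almost periodic: every factor occurs in every sufficiently long factor. -/
def SAP {α : Type*} (ω : ℕ → α) : Prop :=
  ∀ x : List α, (∃ i, OccursAt ω x i) →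
    ∃ l, ∀ j, ∃ i, j ≤ i ∧ i + x.length ≤ j + l ∧ OccursAt ω x i

/-- Almost periodic: every factor occurring infinitely often occurs in every
sufficiently long factor. -/
def AP {α : Type*} (ω : ℕ → α) : Prop :=
  ∀ x : List α, {i | OccursAt ω x i}.Infinite →
    ∃ l, ∀ j, ∃ i, j ≤ i ∧ i + x.length ≤ j + l ∧ OccursAt ω x i

/-- Eventually strongly almost periodic: some suffix is strongly almost periodic. -/
def EAP {α : Type*} (ω : ℕ → α) : Prop :=
  ∃ n, SAP (fun i => ω (n + i))

/-- The state sequence of a finite transducer with transition `f` and initial state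
`q0` on input `ω`. -/
def transStates {σ δ q : Type*} (f : q → σ → q × List δ) (q0 : q) (ω : ℕ → σ) : ℕ → q
  | 0 => q0
  | n + 1 => (f (transStates f q0 ω n) (ω n)).1

/-- The partial output `v_0 v_1 ⋯ v_{n-1}` of a finite transducer. -/
def transPartial {σ δ q : Type*} (f : q → σ → q × List δ) (q0 : q) (ω : ℕ → σ) (n : ℕ) :
    List δ :=
  ((List.range n).map (fun k => (f (transStates f q0 ω k) (ω k)).2)).flatten

/-!
A finite group extension of a strongly almost periodic word is again strongly almost periodic:
a minimal subshift inside the orbit closure of the extended word projects onto the (minimal)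
orbit closure of the base word, so it contains a right translate of the extended word, and points
of minimal subshifts are strongly almost periodic.

Along a strongly almost periodic input `x`, the set of states reachable after reading
`x 0, …, x (n-1)` from all initial states eventually has constant size and depends only on a
window of bounded length of `x`. From then on every input letter maps one such set bijectively
onto the next, so the state sequence is a finite permutation extension of a sliding block code of
the input, and the word of pairs (input letter, state) is eventually strongly almost periodic.
The output is the image of this word under a morphism, and an infinite morphic image of a
strongly almost periodic word is strongly almost periodic because the block lengths are bounded.
-/

section Seg

variable {α β : Type*}

@[simp]
theorem seg_length (ω : ℕ → α) (i n : ℕ) : (seg ω i n).length = n := by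
  simp [seg]

@[simp]
theorem getElem_seg (ω : ℕ → α) (i n k : ℕ) (h : k < (seg ω i n).length) :
    (seg ω i n)[k] = ω (i + k) := by
  simp [seg]

theorem seg_eq_seg_iff {ω ω' : ℕ → α} {i j n : ℕ} :
    seg ω i n = seg ω' j n ↔ ∀ k < n, ω (i + k) = ω' (j + k) := by
  simp [seg, List.map_inj_left]

theorem occursAt_iff {ω : ℕ → α} {u : List α} {i : ℕ} :
    OccursAt ω u i ↔ ∀ k (h : k < u.length), ω (i + k) = u[k] := by
  simp [OccursAt, List.ext_get_iff]

theorem occursAt_seg_iff {ω ω' : ℕ → α} {i j n : ℕ} :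
    OccursAt ω (seg ω' j n) i ↔ seg ω i n = seg ω' j n := by
  rw [OccursAt, seg_length]

theorem occursAt_seg (ω : ℕ → α) (i n : ℕ) : OccursAt ω (seg ω i n) i :=
  occursAt_seg_iff.2 rfl

theorem seg_add (ω : ℕ → α) (i m n : ℕ) :
    seg ω i (m + n) = seg ω i m ++ seg ω (i + m) n := by
  simp [seg, List.range_add, Nat.add_assoc]

theorem seg_shift (ω : ℕ → α) (c i n : ℕ) :
    seg (fun t => ω (c + t)) i n = seg ω (c + i) n := by
  simp [seg, Nat.add_assoc]

theorem occursAt_shift_iff {ω : ℕ → α} {u : List α} {c i : ℕ} :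
    OccursAt (fun t => ω (c + t)) u i ↔ OccursAt ω u (c + i) := by
  rw [OccursAt, OccursAt, seg_shift]

theorem OccursAt.transfer {ω : ℕ → α} {w v : List α} {i i' r : ℕ} (hw : OccursAt ω w i)
    (hw' : OccursAt ω w i') (hv : OccursAt ω v (i + r)) (hr : r + v.length ≤ w.length) :
    OccursAt ω v (i' + r) := by
  rw [occursAt_iff] at hw hw' hv ⊢
  intro k hk
  rw [Nat.add_assoc, hw' _ (by omega), ← hw _ (by omega), ← Nat.add_assoc, hv]

end Seg

section SAP

variable {α β : Type*}

theorem SAP.of_slidingBlockCode {x : ℕ → α} (hx : SAP x) {y : ℕ → β} (W : ℕ)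
    (hy : ∀ m m', seg x m W = seg x m' W → y m = y m') : SAP y := by
  rintro v ⟨m, hm⟩
  obtain ⟨l, hl⟩ := hx (seg x m (v.length + W)) ⟨m, occursAt_seg x m _⟩
  refine ⟨l, fun j => ?_⟩
  obtain ⟨i, hji, hil, hi⟩ := hl j
  rw [seg_length] at hil
  refine ⟨i, hji, by omega, ?_⟩
  have hagree : ∀ k < v.length, y (i + k) = y (m + k) := by
    intro k hk
    apply hy
    rw [seg_eq_seg_iff]
    intro t ht
    simpa only [Nat.add_assoc] using seg_eq_seg_iff.1 (occursAt_seg_iff.1 hi) (k + t) (by omega)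
  rw [OccursAt, ← hm, seg_length, seg_eq_seg_iff]
  exact hagree

theorem SAP.map {x : ℕ → α} (hx : SAP x) (θ : α → β) : SAP (fun n => θ (x n)) :=
  hx.of_slidingBlockCode 1 fun m m' h => by
    simpa using congrArg θ ((seg_eq_seg_iff.1 h) 0 one_pos)

end SAP

section MinimalSet

open Set

variable {X Y : Type*} [TopologicalSpace X] [TopologicalSpace Y]

structure IsMinimalSet (S : X → X) (M : Set X) : Prop where
  nonempty : M.Nonempty
  isClosed : IsClosed M
  mapsTo : MapsTo S M M
  eq_of_subset : ∀ K ⊆ M, K.Nonempty → IsClosed K → MapsTo S K K → K = M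

theorem exists_isMinimalSet_subset [CompactSpace X] (S : X → X) {K : Set X} (hne : K.Nonempty)
    (hcl : IsClosed K) (hK : MapsTo S K K) : ∃ M ⊆ K, IsMinimalSet S M := by
  let P : Set (Set X) := {A | A.Nonempty ∧ IsClosed A ∧ MapsTo S A A}
  have hchain : ∀ c ⊆ P, IsChain (· ⊆ ·) c → c.Nonempty → ∃ lb ∈ P, ∀ s ∈ c, lb ⊆ s := by
    intro c hcP hc hcne
    have : Nonempty c := hcne.to_subtype
    refine ⟨⋂ A : c, A, ⟨?_, isClosed_iInter fun A => (hcP A.2).2.1, ?_⟩,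
      fun s hs => iInter_subset (fun A : c => (A : Set X)) ⟨s, hs⟩⟩
    · refine IsCompact.nonempty_iInter_of_directed_nonempty_isCompact_isClosed _ ?_
        (fun A => (hcP A.2).1) (fun A => (hcP A.2).2.1.isCompact) (fun A => (hcP A.2).2.1)
      rintro A B
      rcases hc.total A.2 B.2 with h | h
      exacts [⟨A, le_rfl, h⟩, ⟨B, h, le_rfl⟩]
    · exact mapsTo_iInter_iInter fun A => (hcP A.2).2.2
  obtain ⟨M, hMK, hM⟩ := zorn_superset_nonempty P hchain K ⟨hne, hcl, hK⟩
  exact ⟨M, hMK, hM.1.1, hM.1.2.1, hM.1.2.2,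
    fun K' hsub hne' hcl' hK' => hsub.antisymm (hM.2 ⟨hne', hcl', hK'⟩ hsub)⟩

theorem IsMinimalSet.exists_iterate_mem [CompactSpace X] {S : X → X} (hS : Continuous S)
    {M : Set X} (hM : IsMinimalSet S M) {U : Set X} (hU : IsOpen U) (hMU : (M ∩ U).Nonempty) :
    ∃ N, ∀ w ∈ M, ∃ n ≤ N, S^[n] w ∈ U := by
  have hopen : ∀ n, IsOpen (S^[n] ⁻¹' U) := fun n => hU.preimage (hS.iterate n)
  have hcover : M ⊆ ⋃ n, S^[n] ⁻¹' U := by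
    by_contra hnot
    -- the points of `M` never entering `U` would form a smaller closed invariant set
    have hdiff := hM.eq_of_subset (M \ ⋃ n, S^[n] ⁻¹' U) sdiff_subset
      (nonempty_of_not_subset hnot) (hM.isClosed.sdiff (isOpen_iUnion hopen))
      fun w hw => ⟨hM.mapsTo hw.1, fun hSw => hw.2 <| by
        obtain ⟨n, hn⟩ := mem_iUnion.1 hSw
        exact mem_iUnion.2 ⟨n + 1, by simpa [Function.iterate_succ_apply] using hn⟩⟩
    obtain ⟨w, hwM, hwU⟩ := hMU
    rw [← hdiff] at hwM
    exact hwM.2 (mem_iUnion.2 ⟨0, hwU⟩)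
  obtain ⟨F, hF⟩ := hM.isClosed.isCompact.elim_finite_subcover _ hopen hcover
  refine ⟨F.sup id, fun w hw => ?_⟩
  obtain ⟨n, hnF, hn⟩ := mem_iUnion₂.1 (hF hw)
  exact ⟨n, Finset.le_sup (f := id) hnF, hn⟩

def orbitClosure (S : X → X) (x : X) : Set X :=
  closure (range fun n => S^[n] x)

theorem mem_orbitClosure_self (S : X → X) (x : X) : x ∈ orbitClosure S x :=
  subset_closure ⟨0, rfl⟩

theorem isClosed_orbitClosure (S : X → X) (x : X) : IsClosed (orbitClosure S x) :=
  isClosed_closure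

theorem mapsTo_orbitClosure {S : X → X} (hS : Continuous S) (x : X) :
    MapsTo S (orbitClosure S x) (orbitClosure S x) := by
  refine MapsTo.closure ?_ hS
  rintro _ ⟨n, rfl⟩
  exact ⟨n + 1, Function.iterate_succ_apply' S n x⟩

theorem orbitClosure_subset {S : X → X} {K : Set X} (hcl : IsClosed K) (hK : MapsTo S K K)
    {x : X} (hx : x ∈ K) : orbitClosure S x ⊆ K :=
  closure_minimal (range_subset_iff.2 fun n => hK.iterate n hx) hcl

theorem image_orbitClosure_subset {S : X → X} {T : Y → Y} {φ : X → Y} (hφ : Continuous φ)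
    (hcomm : Function.Semiconj φ S T) (x : X) :
    φ '' orbitClosure S x ⊆ orbitClosure T (φ x) := by
  refine (image_closure_subset_closure_image hφ).trans (closure_mono ?_)
  rintro _ ⟨_, ⟨n, rfl⟩, rfl⟩
  exact ⟨n, ((hcomm.iterate_right n) x).symm⟩

end MinimalSet

section Shift

open Set

variable {C : Type*}

def shiftSeq (w : ℕ → C) : ℕ → C := fun i => w (i + 1)

theorem shiftSeq_iterate_apply (n : ℕ) (w : ℕ → C) (i : ℕ) : shiftSeq^[n] w i = w (n + i) := by
  induction n generalizing w with
  | zero => simp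
  | succ n ih => rw [Function.iterate_succ_apply, ih]; simp only [shiftSeq]; congr 1; omega

theorem seg_shiftSeq_iterate (n : ℕ) (w : ℕ → C) (i k : ℕ) :
    seg (shiftSeq^[n] w) i k = seg w (n + i) k := by
  simp only [funext (shiftSeq_iterate_apply n w), seg_shift]

theorem occursAt_shiftSeq_iterate_iff {n : ℕ} {w : ℕ → C} {u : List C} {i : ℕ} :
    OccursAt (shiftSeq^[n] w) u i ↔ OccursAt w u (n + i) := by
  rw [OccursAt, OccursAt, seg_shiftSeq_iterate]

variable [TopologicalSpace C]

theorem continuous_shiftSeq : Continuous (shiftSeq (C := C)) :=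
  continuous_pi fun i => continuous_apply (i + 1)

variable [DiscreteTopology C]

theorem isOpen_setOf_occursAt (u : List C) (i : ℕ) : IsOpen {v : ℕ → C | OccursAt v u i} := by
  have : {v : ℕ → C | OccursAt v u i} = ⋂ k : Fin u.length, (fun v => v (i + k)) ⁻¹' {u[k]} := by
    ext v
    simp [occursAt_iff, Fin.forall_iff]
  rw [this]
  exact isOpen_iInter_of_finite fun k => (isOpen_discrete _).preimage (continuous_apply _)

theorem mem_closure_iff_seg {K : Set (ℕ → C)} {w : ℕ → C} :
    w ∈ closure K ↔ ∀ n, ∃ v ∈ K, seg v 0 n = seg w 0 n := by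
  refine ⟨fun hw n => ?_, fun h => mem_closure_iff.2 fun U hU hwU => ?_⟩
  · obtain ⟨v, hvU, hvK⟩ := mem_closure_iff.1 hw _ (isOpen_setOf_occursAt (seg w 0 n) 0)
      (occursAt_seg w 0 n)
    exact ⟨v, hvK, occursAt_seg_iff.1 hvU⟩
  · obtain ⟨I, u, hu, hIU⟩ := isOpen_pi_iff.1 hU w hwU
    obtain ⟨v, hvK, hv⟩ := h (I.sup id + 1)
    refine ⟨v, hIU fun i hi => ?_, hvK⟩
    have hle : i ≤ I.sup id := Finset.le_sup (f := id) hi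
    have hvw := seg_eq_seg_iff.1 hv i (by omega)
    rw [Nat.zero_add] at hvw
    exact hvw ▸ (hu i hi).2

theorem SAP.mem_of_subset_orbitClosure {y : ℕ → C} (hy : SAP y) {K : Set (ℕ → C)}
    (hKy : K ⊆ orbitClosure shiftSeq y) (hne : K.Nonempty) (hcl : IsClosed K)
    (hK : MapsTo shiftSeq K K) : y ∈ K := by
  rw [← hcl.closure_eq, mem_closure_iff_seg]
  intro n
  obtain ⟨v, hvK⟩ := hne
  obtain ⟨l, hl⟩ := hy (seg y 0 n) ⟨0, occursAt_seg y 0 n⟩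
  obtain ⟨_, ⟨m, rfl⟩, hm⟩ := mem_closure_iff_seg.1 (hKy hvK) l
  rw [seg_shiftSeq_iterate, Nat.add_zero] at hm
  obtain ⟨i, hmi, hil, hi⟩ := hl m
  rw [seg_length] at hil
  -- `v` begins like `y` from `m`, so it contains the prefix of `y` found at `i`
  refine ⟨shiftSeq^[i - m] v, hK.iterate _ hvK, ?_⟩
  rw [seg_shiftSeq_iterate, ← occursAt_seg_iff.1 hi, seg_eq_seg_iff]
  intro k hk
  rw [show i - m + 0 + k = 0 + (i - m + k) by omega, ← seg_eq_seg_iff.1 hm (i - m + k) (by omega)]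
  congr 1
  omega

theorem IsMinimalSet.sap [Finite C] {M : Set (ℕ → C)} (hM : IsMinimalSet shiftSeq M)
    {w : ℕ → C} (hw : w ∈ M) : SAP w := by
  rintro u ⟨m, hm⟩
  obtain ⟨N, hN⟩ := hM.exists_iterate_mem continuous_shiftSeq (isOpen_setOf_occursAt u 0)
    ⟨shiftSeq^[m] w, hM.mapsTo.iterate m hw, occursAt_shiftSeq_iterate_iff.2 hm⟩
  refine ⟨N + u.length, fun j => ?_⟩
  obtain ⟨n, hnN, hn⟩ : ∃ n ≤ N, OccursAt (shiftSeq^[n] (shiftSeq^[j] w)) u 0 :=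
    hN _ (hM.mapsTo.iterate j hw)
  refine ⟨j + n, by omega, by omega, ?_⟩
  rw [← Function.iterate_add_apply, occursAt_shiftSeq_iterate_iff] at hn
  simpa [Nat.add_comm n j] using hn

end Shift

section Cocycle

open Set

theorem SAP.prod_cocycle {B G : Type*} [Finite B] [Finite G] [Group G] {y : ℕ → B} (hy : SAP y)
    (π : B → G) {g : ℕ → G} (hg : ∀ n, g (n + 1) = π (y n) * g n) :
    SAP (fun n => (y n, g n)) := by
  let _ : TopologicalSpace B := ⊥
  have _ : DiscreteTopology B := ⟨rfl⟩
  let _ : TopologicalSpace G := ⊥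
  have _ : DiscreteTopology G := ⟨rfl⟩
  set z : ℕ → B × G := fun n => (y n, g n)
  let E : Set (ℕ → B × G) := {w | ∀ n, (w (n + 1)).2 = π (w n).1 * (w n).2}
  have hE : orbitClosure shiftSeq z ⊆ E := by
    refine orbitClosure_subset (K := E) ?_ (fun w hw n => hw (n + 1)) hg
    simp only [E, ofPred_forall]
    refine isClosed_iInter fun n => ?_
    exact isClosed_eq (continuous_apply (n + 1)).snd
      ((continuous_of_discreteTopology (f := fun c : B × G => π c.1 * c.2)).comp
        (continuous_apply n))
  obtain ⟨M, hMz, hM⟩ := exists_isMinimalSet_subset shiftSeq ⟨z, mem_orbitClosure_self _ z⟩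
    (isClosed_orbitClosure _ z) (mapsTo_orbitClosure continuous_shiftSeq z)
  let p : (ℕ → B × G) → ℕ → B := fun w n => (w n).1
  have hp : Continuous p := continuous_pi fun n => (continuous_apply n).fst
  have hpS : Function.Semiconj p shiftSeq shiftSeq := fun _ => rfl
  have hy_mem : y ∈ p '' M := hy.mem_of_subset_orbitClosure
    ((image_mono hMz).trans (image_orbitClosure_subset hp hpS z)) (hM.nonempty.image p)
    (hM.isClosed.isCompact.image hp).isClosed
    (fun _ ⟨w, hw, hwy⟩ => ⟨shiftSeq w, hM.mapsTo hw, hwy ▸ rfl⟩)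
  obtain ⟨w, hwM, rfl⟩ := hy_mem
  -- `w` lies over `y` and satisfies the cocycle relation, so it is `z` right-translated in `G`
  set c := ((w 0).2)⁻¹ * g 0
  have hwz : ∀ n, (w n).2 * c = g n := by
    intro n
    induction n with
    | zero => simp [c]
    | succ n ih => rw [hE (hMz hwM) n, mul_assoc, ih, hg]
  simpa [hwz] using (hM.sap hwM).map fun b : B × G => (b.1, b.2 * c)

theorem SAP.prod_perm {B D : Type*} [Finite B] [Finite D] {y : ℕ → B} (hy : SAP y)
    (π : B → Equiv.Perm D) {z : ℕ → D} (hz : ∀ n, z (n + 1) = π (y n) (z n)) :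
    SAP (fun n => (y n, z n)) := by
  let g : ℕ → Equiv.Perm D := fun n => Nat.rec 1 (fun k gk => π (y k) * gk) n
  have hgz : ∀ n, g n (z 0) = z n := by
    intro n
    induction n with
    | zero => rfl
    | succ n ih => rw [hz, ← ih]; rfl
  simpa [hgz] using (hy.prod_cocycle π (g := g) fun _ => rfl).map
    fun c : B × Equiv.Perm D => (c.1, c.2 (z 0))

end Cocycle

theorem Set.InjOn.exists_perm_eqOn {α : Type*} [Finite α] {g : α → α} {s : Set α}
    (h : Set.InjOn g s) : ∃ e : Equiv.Perm α, Set.EqOn e g s := by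
  classical
  exact ⟨(Equiv.Set.imageOfInjOn g s h).extendSubtype,
    fun a ha => Equiv.extendSubtype_apply_of_mem _ a ha⟩

section Automaton

open Set

variable {σ δ q : Type*} (f : q → σ → q × List δ)

theorem transStates_add (r : q) (x : ℕ → σ) (m n : ℕ) :
    transStates f r x (m + n) = transStates f (transStates f r x m) (fun i => x (m + i)) n := by
  induction n with
  | zero => rfl
  | succ n ih => exact congrArg (fun s => (f s (x (m + n))).1) ih

theorem transStates_congr (r : q) {x x' : ℕ → σ} {n : ℕ} (h : ∀ k < n, x k = x' k) :
    transStates f r x n = transStates f r x' n := by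
  induction n with
  | zero => rfl
  | succ n ih =>
    simp only [transStates, ih fun k hk => h k (by omega), h n (Nat.lt_succ_self n)]

def reachableStates (x : ℕ → σ) (n : ℕ) : Set q :=
  range fun r => transStates f r x n

theorem transStates_mem_reachableStates (r : q) (x : ℕ → σ) (n : ℕ) :
    transStates f r x n ∈ reachableStates f x n :=
  ⟨r, rfl⟩

theorem reachableStates_add (x : ℕ → σ) (m n : ℕ) :
    reachableStates f x (m + n) =
      (fun r => transStates f r (fun i => x (m + i)) n) '' reachableStates f x m := by
  simp only [reachableStates, ← range_comp, Function.comp_def, transStates_add]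

theorem reachableStates_succ (x : ℕ → σ) (n : ℕ) :
    reachableStates f x (n + 1) = (fun r => (f r (x n)).1) '' reachableStates f x n :=
  reachableStates_add f x n 1

theorem reachableStates_congr {x x' : ℕ → σ} {n : ℕ} (h : ∀ k < n, x k = x' k) :
    reachableStates f x n = reachableStates f x' n := by
  simp only [reachableStates, transStates_congr f _ h]

variable [Finite q]

theorem ncard_reachableStates_add_le (x : ℕ → σ) (m n : ℕ) :
    (reachableStates f x (m + n)).ncard ≤ (reachableStates f x m).ncard := by
  rw [reachableStates_add]
  exact ncard_image_le

theorem ncard_reachableStates_le_of_add_le (x : ℕ → σ) {a n t : ℕ} (h : a + n ≤ t) :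
    (reachableStates f x t).ncard ≤ (reachableStates f (fun i => x (a + i)) n).ncard := by
  obtain ⟨c, rfl⟩ := Nat.exists_eq_add_of_le h
  calc (reachableStates f x (a + n + c)).ncard
      ≤ (reachableStates f (fun i => x (a + i)) (n + c)).ncard := by
        rw [Nat.add_assoc, reachableStates_add]
        exact ncard_le_ncard (image_subset_range _ _)
    _ ≤ _ := ncard_reachableStates_add_le f _ n c

theorem SAP.exists_reachableStates_local {x : ℕ → σ} (hx : SAP x) :
    ∃ K, (∀ m, reachableStates f (fun i => x (m + i)) K = reachableStates f x (m + K)) ∧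
      ∀ n, K ≤ n → InjOn (fun r => (f r (x n)).1) (reachableStates f x n) := by
  set c : ℕ → ℕ := fun n => (reachableStates f x n).ncard
  set n1 := Function.argmin c
  have hstab : ∀ n, n1 ≤ n → c n = c n1 := by
    intro n hn
    obtain ⟨k, rfl⟩ := Nat.exists_eq_add_of_le hn
    exact (ncard_reachableStates_add_le f x n1 k).antisymm (Function.argmin_le c _)
  obtain ⟨K, hK⟩ := hx (seg x 0 n1) ⟨0, occursAt_seg x 0 n1⟩
  have hn1K : n1 ≤ K := by
    obtain ⟨i, -, hiK, -⟩ := hK 0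
    simp only [seg_length] at hiK
    omega
  refine ⟨K, fun m => ?_, fun n hn => ?_⟩
  · obtain ⟨i, hmi, hiK, hi⟩ := hK m
    rw [seg_length] at hiK
    refine (eq_of_subset_of_ncard_le ?_ ?_).symm
    · rw [reachableStates_add]
      exact image_subset_range _ _
    -- the window starting at `m` contains a copy of `x 0, …, x (n1 - 1)`, after which at most
    -- `c n1` states are reachable
    calc (reachableStates f (fun i => x (m + i)) K).ncard
        ≤ (reachableStates f (fun j => x (m + (i - m + j))) n1).ncard :=
          ncard_reachableStates_le_of_add_le f _ (by omega)
      _ = c n1 := congrArg ncard <| reachableStates_congr f fun k hk => by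
          rw [show m + (i - m + k) = i + k by omega, occursAt_iff.1 hi k (by simpa using hk),
            getElem_seg, Nat.zero_add]
      _ = c (m + K) := (hstab _ (by omega)).symm
  · refine injOn_of_ncard_image_eq ?_
    rw [← reachableStates_succ]
    exact (hstab _ (by omega)).trans (hstab n (by omega)).symm

theorem SAP.exists_sap_prod_transStates [Finite σ] {x : ℕ → σ} (hx : SAP x) (r : q) :
    ∃ K, SAP (fun m => (x (K + m), transStates f r x (K + m))) := by
  obtain ⟨K, hloc, hinj⟩ := hx.exists_reachableStates_local f
  let Y : ℕ → σ × Set q := fun m => (x (K + m), reachableStates f x (K + m))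
  have hY : SAP Y := hx.of_slidingBlockCode (K + 1) fun m m' h => by
    have hxx := seg_eq_seg_iff.1 h
    simp only [Y, Nat.add_comm K, ← hloc]
    rw [hxx K (by omega), reachableStates_congr f fun k hk => hxx k (by omega)]
  choose! π hπ using fun (c : σ × Set q) (h : InjOn (fun r => (f r c.1).1) c.2) =>
    h.exists_perm_eqOn
  refine ⟨K, ?_⟩
  refine (hY.prod_perm π (z := fun m => transStates f r x (K + m)) fun m => ?_).map
    fun c => (c.1.1, c.2)
  exact (hπ (Y m) (hinj _ (Nat.le_add_right K m)) (transStates_mem_reachableStates f r x _)).symm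

theorem EAP.exists_sap_prod_transStates [Finite σ] {x : ℕ → σ} (hx : EAP x) (r : q) :
    ∃ N, SAP (fun m => (x (N + m), transStates f r x (N + m))) := by
  obtain ⟨n, hn⟩ := hx
  obtain ⟨K, hK⟩ := hn.exists_sap_prod_transStates f (transStates f r x n)
  exact ⟨n + K, by simpa only [Nat.add_assoc, transStates_add f r x n] using hK⟩

end Automaton

theorem Nat.exists_le_lt_succ_of_exists_lt {L : ℕ → ℕ} {j : ℕ} (h0 : L 0 ≤ j)
    (h : ∃ n, j < L n) : ∃ n, L n ≤ j ∧ j < L (n + 1) := by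
  classical
  obtain ⟨k, hk⟩ : ∃ k, Nat.find h = k + 1 := Nat.exists_eq_add_one_of_ne_zero fun hzero => by
    have := Nat.find_spec h
    rw [hzero] at this
    omega
  exact ⟨k, not_lt.1 (Nat.find_min h (by omega)), hk ▸ Nat.find_spec h⟩

section Concatenation

variable {A D : Type*} (β : A → List D)

theorem flatMap_seg_add (y : ℕ → A) (i m n : ℕ) :
    (seg y i (m + n)).flatMap β = (seg y i m).flatMap β ++ (seg y (i + m) n).flatMap β := by
  rw [seg_add, List.flatMap_append]

theorem length_flatMap_seg_add (y : ℕ → A) (i m n : ℕ) :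
    ((seg y i (m + n)).flatMap β).length =
      ((seg y i m).flatMap β).length + ((seg y (i + m) n).flatMap β).length := by
  rw [flatMap_seg_add, List.length_append]

theorem occursAt_flatMap_seg {y : ℕ → A} {ν : ℕ → D}
    (hν : ∀ n, OccursAt ν ((seg y 0 n).flatMap β) 0) (n t : ℕ) :
    OccursAt ν ((seg y n t).flatMap β) ((seg y 0 n).flatMap β).length := by
  have h := hν (n + t)
  rw [flatMap_seg_add, OccursAt, List.length_append, seg_add, ← hν n, seg_length,
    Nat.zero_add, Nat.zero_add] at h
  exact List.append_cancel_left h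

theorem SAP.of_flatMap [Finite A] {y : ℕ → A} (hy : SAP y) {ν : ℕ → D}
    (hν : ∀ n, OccursAt ν ((seg y 0 n).flatMap β) 0)
    (hinf : ∀ m, ∃ n, m ≤ ((seg y 0 n).flatMap β).length) : SAP ν := by
  set L : ℕ → ℕ := fun n => ((seg y 0 n).flatMap β).length
  have hLadd : ∀ n t, L (n + t) = L n + ((seg y n t).flatMap β).length := by
    simp only [L, length_flatMap_seg_add, Nat.zero_add, implies_true]
  have hmono : Monotone L := monotone_nat_of_le_succ fun n => by rw [hLadd]; omega
  obtain ⟨B, hB⟩ : ∃ B, ∀ a, (β a).length ≤ B :=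
    (Set.finite_range fun a => (β a).length).bddAbove.imp fun _ h a => h ⟨a, rfl⟩
  have hLle : ∀ n t, L (n + t) ≤ L n + B * t := by
    intro n t
    rw [hLadd, List.length_flatMap, Nat.mul_comm]
    have := List.sum_le_card_nsmul ((seg y n t).map fun a => (β a).length) B fun k hk => by
      obtain ⟨a, -, rfl⟩ := List.mem_map.1 hk
      exact hB a
    simpa using this
  have hlocate : ∀ j, ∃ n, L n ≤ j ∧ j < L (n + 1) := fun j =>
    Nat.exists_le_lt_succ_of_exists_lt (by simp [L, seg])
      ((hinf (j + 1)).imp fun _ h => h)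
  rintro v ⟨j0, hv⟩
  obtain ⟨n, hn, -⟩ := hlocate j0
  obtain ⟨t, ht⟩ : ∃ t, j0 + v.length ≤ L t := hinf (j0 + v.length)
  obtain ⟨l, hl⟩ := hy (seg y n t) ⟨n, occursAt_seg y n t⟩
  have hcover : j0 - L n + v.length ≤ ((seg y n t).flatMap β).length := by
    have := hmono (Nat.le_add_left t n)
    rw [hLadd] at this
    omega
  -- each occurrence of the blocks `y n, …, y (n + t - 1)` carries a copy of `v`
  refine ⟨B * (l + 1), fun j => ?_⟩
  obtain ⟨n', hn', hn'1⟩ := hlocate j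
  obtain ⟨i, hi, hil, hocc⟩ := hl (n' + 1)
  rw [seg_length] at hil
  have hseg : seg y i t = seg y n t := occursAt_seg_iff.1 hocc
  have hw' := occursAt_flatMap_seg β hν i t
  rw [hseg] at hw'
  refine ⟨L i + (j0 - L n), ?_, ?_, (occursAt_flatMap_seg β hν n t).transfer hw' ?_ hcover⟩
  · have := hmono hi
    omega
  · have h1 := hLadd i t
    have h2 := hmono (show i + t ≤ n' + (l + 1) by omega)
    have h3 := hLle n' (l + 1)
    rw [hseg] at h1
    omega
  · rwa [Nat.add_sub_cancel' hn]

end Concatenation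

theorem eap_transducer_general {σ δ q : Type*} [Finite σ] [Finite q]
    (f : q → σ → q × List δ) (q0 : q) (ω : ℕ → σ) (h : EAP ω) (ν : ℕ → δ)
    (hpre : ∀ n, seg ν 0 (transPartial f q0 ω n).length = transPartial f q0 ω n)
    (hinf : ∀ m, ∃ n, m ≤ (transPartial f q0 ω n).length) :
    EAP ν := by
  obtain ⟨N, hN⟩ := h.exists_sap_prod_transStates f q0
  set W : ℕ → σ × q := fun k => (ω k, transStates f q0 ω k)
  set β : σ × q → List δ := fun c => (f c.2 c.1).2
  have hP : ∀ n, transPartial f q0 ω n = (seg W 0 n).flatMap β := fun n => by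
    simp [transPartial, seg, List.flatMap, W, β, Function.comp_def]
  have hν : ∀ n, OccursAt ν ((seg W 0 n).flatMap β) 0 := fun n => hP n ▸ hpre n
  change SAP fun m => W (N + m) at hN
  refine ⟨((seg W 0 N).flatMap β).length, hN.of_flatMap β (fun n => ?_) (fun m => ?_)⟩
  · rw [occursAt_shift_iff, Nat.add_zero, seg_shift W, Nat.add_zero]
    exact occursAt_flatMap_seg β hν N n
  · obtain ⟨n, hn⟩ := hinf (((seg W 0 N).flatMap β).length + m)
    refine ⟨n, ?_⟩
    have h1 := length_flatMap_seg_add β W 0 n N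
    have h2 := length_flatMap_seg_add β W 0 N n
    rw [Nat.add_comm n N] at h1
    rw [hP] at hn
    rw [seg_shift W, Nat.add_zero]
    simp only [Nat.zero_add] at h1 h2
    omega

/-- Finite transducers preserve eventual strong almost periodicity (when the output
is infinite). `ν` is the infinite output word: every prefix of `ν` of length
`|v_0 ⋯ v_{n-1}|` equals `v_0 ⋯ v_{n-1}`, and these lengths are unbounded. -/
theorem eap_transducer {σ δ q : Type*} [Finite σ] [Finite δ] [Finite q]
    (f : q → σ → q × List δ) (q0 : q) (ω : ℕ → σ) (h : EAP ω) (ν : ℕ → δ)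
    (hpre : ∀ n, seg ν 0 (transPartial f q0 ω n).length = transPartial f q0 ω n)
    (hinf : ∀ m, ∃ n, m ≤ (transPartial f q0 ω n).length) :
    EAP ν :=
  eap_transducer_general f q0 ω h ν hpre hinf
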